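/- arXiv:math/0403179 — 3 statements merged into one kernel-verified Lean document; each statement's English description precedes it below -/
import Mathlib

section
/- For every γ ≥ 0 and every function v : ℝ → ℝ that is continuous on [0, ∞), continuously differentiable on (0, ∞), and such that both v and v′ are square-integrable on (0, ∞), one has ∫₀^∞ v′(x)² dx − γ · v(0)² ≥ −γ² ∫₀^∞ v(x)² dx. -/
/-!
Expanding `0 ≤ ∫ (v' + γ v)²` gives `∫ v'² + γ ∫ (v²)' + γ² ∫ v² ≥ 0`, and `∫₀^∞ (v²)' = -v(0)²`
because `v²` and `(v²)' = 2 v v'` are both integrable on the half-line, which forces `v² → 0` at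
infinity.
-/

open MeasureTheory Real Filter Topology Set

theorem integrable_two_mul_of_integrable_sq {α : Type*} [MeasurableSpace α] {μ : Measure α}
    {f g : α → ℝ} (hf : AEStronglyMeasurable f μ) (hg : AEStronglyMeasurable g μ)
    (hf2 : Integrable (fun x => f x ^ 2) μ) (hg2 : Integrable (fun x => g x ^ 2) μ) :
    Integrable (fun x => 2 * f x * g x) μ :=
  (hf2.add hg2).mono' ((aestronglyMeasurable_const.mul hf).mul hg) <| ae_of_all _ fun x => by
    rw [Pi.add_apply, norm_eq_abs, abs_le]
    constructor <;> nlinarith [two_mul_le_add_sq (f x) (g x), two_mul_le_add_sq (-f x) (g x)]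

theorem integral_Ioi_eq_neg_of_hasDerivAt_of_integrableOn {E : Type*} [NormedAddCommGroup E]
    [NormedSpace ℝ E] [CompleteSpace E] {f f' : ℝ → E} {a : ℝ}
    (hcont : ContinuousWithinAt f (Ici a) a)
    (hderiv : ∀ x ∈ Ioi a, HasDerivAt f (f' x) x) (f'int : IntegrableOn f' (Ioi a))
    (fint : IntegrableOn f (Ioi a)) :
    ∫ x in Ioi a, f' x = -f a := by
  rw [integral_Ioi_of_hasDerivAt_of_tendsto hcont hderiv f'int
    (tendsto_zero_of_hasDerivAt_of_integrableOn_Ioi hderiv f'int fint), zero_sub]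

theorem integral_Ioi_two_mul_deriv_eq_neg_sq {v : ℝ → ℝ} {a : ℝ}
    (hc : ContinuousWithinAt v (Ici a) a) (hd : ∀ x ∈ Ioi a, DifferentiableAt ℝ v x)
    (hv2 : IntegrableOn (fun x => v x ^ 2) (Ioi a))
    (hcross : IntegrableOn (fun x => 2 * v x * deriv v x) (Ioi a)) :
    ∫ x in Ioi a, 2 * v x * deriv v x = -v a ^ 2 :=
  integral_Ioi_eq_neg_of_hasDerivAt_of_integrableOn (hc.pow 2)
    (fun x hx => by simpa using (hd x hx).hasDerivAt.pow 2) hcross hv2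

theorem stmt1_general (γ : ℝ) (v : ℝ → ℝ)
    (hc : ContinuousOn v (Set.Ici 0))
    (hd : ∀ x ∈ Set.Ioi (0:ℝ), DifferentiableAt ℝ v x)
    (hv2 : IntegrableOn (fun x => (v x) ^ 2) (Set.Ioi 0) volume)
    (hdv2 : IntegrableOn (fun x => (deriv v x) ^ 2) (Set.Ioi 0) volume) :
    (∫ x in Set.Ioi (0:ℝ), (deriv v x) ^ 2) - γ * (v 0) ^ 2 ≥
      -γ ^ 2 * ∫ x in Set.Ioi (0:ℝ), (v x) ^ 2 := by
  have hcross : IntegrableOn (fun x => 2 * v x * deriv v x) (Ioi 0) :=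
    integrable_two_mul_of_integrable_sq
      ((hc.mono Ioi_subset_Ici_self).aestronglyMeasurable measurableSet_Ioi)
      (measurable_deriv v).aestronglyMeasurable hv2 hdv2
  have hboundary : ∫ x in Ioi 0, 2 * v x * deriv v x = -v 0 ^ 2 :=
    integral_Ioi_two_mul_deriv_eq_neg_sq (hc 0 self_mem_Ici) hd hv2 hcross
  have hexpand : ∫ x in Ioi 0, (deriv v x + γ * v x) ^ 2 = (∫ x in Ioi 0, deriv v x ^ 2) +
      γ * (∫ x in Ioi 0, 2 * v x * deriv v x) + γ ^ 2 * ∫ x in Ioi 0, v x ^ 2 :=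
    calc ∫ x in Ioi 0, (deriv v x + γ * v x) ^ 2
        = ∫ x in Ioi 0, deriv v x ^ 2 + γ * (2 * v x * deriv v x) + γ ^ 2 * v x ^ 2 :=
          setIntegral_congr_fun measurableSet_Ioi fun x _ => by ring
      _ = _ := by
          rw [integral_add (hdv2.fun_add (hcross.const_mul γ)) (hv2.const_mul _),
            integral_add hdv2 (hcross.const_mul γ), integral_const_mul, integral_const_mul]
  have hnonneg : 0 ≤ ∫ x in Ioi 0, (deriv v x + γ * v x) ^ 2 :=
    setIntegral_nonneg measurableSet_Ioi fun x _ => sq_nonneg _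
  rw [hexpand, hboundary] at hnonneg
  linarith

/-- The one-dimensional Robin inequality on the half-line:
`∫₀^∞ v'(x)² dx - γ v(0)² ≥ -γ² ∫₀^∞ v(x)² dx`. -/
theorem stmt1 (γ : ℝ) (hγ : 0 ≤ γ) (v : ℝ → ℝ)
    (hc : ContinuousOn v (Set.Ici 0))
    (hd : ∀ x ∈ Set.Ioi (0:ℝ), DifferentiableAt ℝ v x)
    (hd' : ContinuousOn (deriv v) (Set.Ioi 0))
    (hv2 : IntegrableOn (fun x => (v x) ^ 2) (Set.Ioi 0) volume)
    (hdv2 : IntegrableOn (fun x => (deriv v x) ^ 2) (Set.Ioi 0) volume) :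
    (∫ x in Set.Ioi (0:ℝ), (deriv v x) ^ 2) - γ * (v 0) ^ 2 ≥
      -γ ^ 2 * ∫ x in Set.Ioi (0:ℝ), (v x) ^ 2 :=
  stmt1_general γ v hc hd hv2 hdv2
end

section
/- Let l > 0 and γ > 0. Then there is a unique μ > 0 satisfying μ · tanh(μ) = γ l, and the infimum, over all functions v : ℝ → ℝ that are continuous on [−l, l], continuously differentiable on (−l, l), with ∫_{−l}^{l} v′(x)² dx < ∞ and ∫_{−l}^{l} v(x)² dx > 0, of the Rayleigh quotient (∫_{−l}^{l} v′(x)² dx − γ (v(−l)² + v(l)²)) / ∫_{−l}^{l} v(x)² dx equals −μ²/l². -/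
/-!
Write `β = μ / l` and `φ x = β tanh (β x)`. Then `φ` solves the Riccati equation `φ' = β² - φ²` and
`φ (±l) = ±γ`, so integrating `(φ v²)' = v'² + β² v² - (v' - φ v)²` over `(-l, l)` completes the square:
`∫ v'² - γ (v(-l)² + v(l)²) + β² ∫ v² = ∫ (v' - φ v)² ≥ 0`.
Equality holds for the ground state `v = cosh (β x)`, for which `v' = φ v`.
-/

open MeasureTheory Real Filter Topology

noncomputable section

/-- Admissibility for the one-dimensional Robin problem on `(-l, l)`:
continuous on `[-l, l]`, continuously differentiable on `(-l, l)`,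
with `∫ v'² < ∞` and `∫ v² > 0`. -/
def CondI (l : ℝ) (v : ℝ → ℝ) : Prop :=
  ContinuousOn v (Set.Icc (-l) l) ∧
  (∀ x ∈ Set.Ioo (-l) l, DifferentiableAt ℝ v x) ∧
  ContinuousOn (deriv v) (Set.Ioo (-l) l) ∧
  IntegrableOn (fun x => (deriv v x) ^ 2) (Set.Ioo (-l) l) volume ∧
  0 < ∫ x in Set.Ioo (-l) l, (v x) ^ 2

/-- The Rayleigh quotient for the Robin problem on `(-l, l)` with
boundary points `±l`. -/
def QI (l γ : ℝ) (v : ℝ → ℝ) : ℝ :=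
  ((∫ x in Set.Ioo (-l) l, (deriv v x) ^ 2) - γ * ((v (-l)) ^ 2 + (v l) ^ 2)) /
    ∫ x in Set.Ioo (-l) l, (v x) ^ 2

open Set

namespace Real

theorem hasDerivAt_tanh (x : ℝ) : HasDerivAt tanh (1 - tanh x ^ 2) x := by
  have h : HasDerivAt (fun y => sinh y / cosh y) _ x :=
    (hasDerivAt_sinh x).div (hasDerivAt_cosh x) (cosh_pos x).ne'
  rw [show tanh = fun y => sinh y / cosh y from funext tanh_eq_sinh_div_cosh]
  refine h.congr_deriv ?_
  field_simp

@[fun_prop]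
theorem continuous_tanh : Continuous tanh :=
  continuous_iff_continuousAt.2 fun x => (hasDerivAt_tanh x).continuousAt

theorem strictMono_tanh : StrictMono tanh :=
  strictMono_of_hasDerivAt_pos hasDerivAt_tanh fun x => sub_pos.2 (tanh_sq_lt_one x)

theorem tanh_pos {x : ℝ} (hx : 0 < x) : 0 < tanh x := by
  simpa using strictMono_tanh hx

end Real

theorem strictMonoOn_mul_tanh : StrictMonoOn (fun μ => μ * tanh μ) (Ici 0) := by
  intro a ha b _ hab
  have htb : 0 < tanh b := tanh_pos (lt_of_le_of_lt ha hab)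
  calc a * tanh a ≤ a * tanh b := mul_le_mul_of_nonneg_left (strictMono_tanh hab).le ha
    _ < b * tanh b := mul_lt_mul_of_pos_right hab htb

theorem tendsto_mul_tanh_atTop : Tendsto (fun μ => μ * tanh μ) atTop atTop := by
  refine tendsto_atTop_mono' _ ?_ (tendsto_id.atTop_mul_const (tanh_pos one_pos))
  filter_upwards [eventually_ge_atTop 1] with μ hμ
  exact mul_le_mul_of_nonneg_left (strictMono_tanh.monotone hμ) (zero_le_one.trans hμ)

theorem existsUnique_mul_tanh_eq {c : ℝ} (hc : 0 < c) : ∃! μ, 0 < μ ∧ μ * tanh μ = c := by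
  have hcont : ContinuousOn (fun μ => μ * tanh μ) (Ici 0) :=
    (continuous_id.mul continuous_tanh).continuousOn
  obtain ⟨μ, hμ, hμc⟩ := intermediate_value_Ioi hcont tendsto_mul_tanh_atTop (by simpa using hc)
  refine ⟨μ, ⟨hμ, hμc⟩, fun ν ⟨hν, hνc⟩ => ?_⟩
  exact strictMonoOn_mul_tanh.injOn (mem_Ici.2 hν.le) (mem_Ici.2 (le_of_lt hμ)) (hνc.trans hμc.symm)

theorem integral_sq_deriv_sub_mul_eq {a b c : ℝ} (hab : a ≤ b) {φ v : ℝ → ℝ}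
    (hφc : ContinuousOn φ (Icc a b)) (hφ : ∀ x ∈ Ioo a b, HasDerivAt φ (c - φ x ^ 2) x)
    (hvc : ContinuousOn v (Icc a b)) (hvd : ∀ x ∈ Ioo a b, DifferentiableAt ℝ v x)
    (hv' : IntegrableOn (fun x => deriv v x ^ 2) (Ioo a b)) :
    ∫ x in Ioo a b, (deriv v x - φ x * v x) ^ 2 =
      (∫ x in Ioo a b, deriv v x ^ 2) + c * (∫ x in Ioo a b, v x ^ 2)
        - (φ b * v b ^ 2 - φ a * v a ^ 2) := by
  have hv2 : IntegrableOn (fun x => c * v x ^ 2) (Ioo a b) :=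
    ((hvc.pow 2).integrableOn_Icc.mono_set Ioo_subset_Icc_self).const_mul c
  obtain ⟨M, hM⟩ := isCompact_Icc.exists_bound_of_continuousOn hφc
  have hw : IntegrableOn (fun x => (deriv v x - φ x * v x) ^ 2) (Ioo a b) := by
    refine ((hv'.const_mul 2).add
      ((hvc.pow 2).integrableOn_Icc.mono_set Ioo_subset_Icc_self |>.const_mul (2 * M ^ 2))).mono'
      ?_ ?_
    · exact ((aestronglyMeasurable_deriv v _).sub
        (((hφc.mul hvc).mono Ioo_subset_Icc_self).aestronglyMeasurable measurableSet_Ioo)).pow 2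
    · refine (ae_restrict_iff' measurableSet_Ioo).2 (ae_of_all _ fun x hx => ?_)
      have hφx : φ x ^ 2 ≤ M ^ 2 := by
        simpa [sq_abs] using pow_le_pow_left₀ (abs_nonneg _) (hM x (Ioo_subset_Icc_self hx)) 2
      rw [Real.norm_eq_abs, abs_of_nonneg (sq_nonneg _), Pi.add_apply, Pi.pow_apply]
      nlinarith [sq_nonneg (deriv v x + φ x * v x), mul_le_mul_of_nonneg_right hφx (sq_nonneg (v x))]
  have hf' : IntegrableOn (fun x => deriv v x ^ 2 + c * v x ^ 2) (Ioo a b) := hv'.add hv2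
  -- `(φ v²)' = v'² + c v² - (v' - φ v)²` by the Riccati equation for `φ`
  have hFTC := intervalIntegral.integral_eq_sub_of_hasDerivAt_of_le hab
    (f := fun x => φ x * v x ^ 2)
    (f' := fun x => deriv v x ^ 2 + c * v x ^ 2 - (deriv v x - φ x * v x) ^ 2)
    (hφc.mul (hvc.pow 2)) (fun x hx => ((hφ x hx).mul ((hvd x hx).hasDerivAt.pow 2)).congr_deriv
      (by simp only [Pi.pow_apply]; ring))
    ((intervalIntegrable_iff_integrableOn_Ioo_of_le hab).2 (hf'.sub hw))
  rw [intervalIntegral.integral_of_le hab, integral_Ioc_eq_integral_Ioo,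
    integral_sub hf' hw, integral_add hv' hv2, integral_const_mul] at hFTC
  linarith

theorem hasDerivAt_mul_tanh_mul (β x : ℝ) :
    HasDerivAt (fun x => β * tanh (β * x)) (β ^ 2 - (β * tanh (β * x)) ^ 2) x :=
  (((hasDerivAt_tanh (β * x)).comp x ((hasDerivAt_id x).const_mul β)).const_mul β).congr_deriv
    (by ring)

theorem QI_eq_neg_sq_add {l γ β : ℝ} (hl : 0 ≤ l) (hβ : β * tanh (β * l) = γ) {v : ℝ → ℝ}
    (hv : CondI l v) :
    QI l γ v = -β ^ 2 + (∫ x in Ioo (-l) l, (deriv v x - β * tanh (β * x) * v x) ^ 2) /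
      ∫ x in Ioo (-l) l, v x ^ 2 := by
  obtain ⟨hvc, hvd, -, hv', hpos⟩ := hv
  have hφc : Continuous fun x => β * tanh (β * x) := by fun_prop
  rw [integral_sq_deriv_sub_mul_eq (by linarith) hφc.continuousOn
    (fun x _ => hasDerivAt_mul_tanh_mul β x) hvc hvd hv', QI]
  simp only [mul_neg, tanh_neg, hβ]
  field_simp
  ring

theorem neg_sq_le_QI {l γ β : ℝ} (hl : 0 ≤ l) (hβ : β * tanh (β * l) = γ) {v : ℝ → ℝ}
    (hv : CondI l v) : -β ^ 2 ≤ QI l γ v := by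
  rw [QI_eq_neg_sq_add hl hβ hv, le_add_iff_nonneg_right]
  exact div_nonneg (setIntegral_nonneg measurableSet_Ioo fun x _ => sq_nonneg _) hv.2.2.2.2.le

theorem deriv_cosh_mul (β : ℝ) : deriv (fun x => cosh (β * x)) = fun x => β * sinh (β * x) := by
  funext x
  have h : HasDerivAt (fun x => cosh (β * x)) (sinh (β * x) * (β * 1)) x :=
    (hasDerivAt_cosh (β * x)).comp x ((hasDerivAt_id x).const_mul β)
  rw [h.deriv]
  ring

theorem condI_cosh_mul {l : ℝ} (hl : 0 < l) (β : ℝ) : CondI l fun x => cosh (β * x) := by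
  have hc : Continuous fun x => cosh (β * x) := by fun_prop
  have hd : Continuous fun x => β * sinh (β * x) := by fun_prop
  refine ⟨hc.continuousOn, fun x _ => by fun_prop, ?_, ?_, ?_⟩
  · rw [deriv_cosh_mul]; exact hd.continuousOn
  · rw [deriv_cosh_mul]
    exact (hd.pow 2).continuousOn.integrableOn_Icc.mono_set Ioo_subset_Icc_self
  · rw [integral_pos_iff_support_of_nonneg (fun x => sq_nonneg _)
      ((hc.pow 2).continuousOn.integrableOn_Icc.mono_set Ioo_subset_Icc_self)]
    simp [Function.support, (cosh_pos _).ne', hl]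

theorem QI_cosh_mul {l γ β : ℝ} (hl : 0 < l) (hβ : β * tanh (β * l) = γ) :
    QI l γ (fun x => cosh (β * x)) = -β ^ 2 := by
  have h (x : ℝ) : β * sinh (β * x) - β * tanh (β * x) * cosh (β * x) = 0 := by
    rw [tanh_eq_sinh_div_cosh]
    field_simp [(cosh_pos (β * x)).ne']
    ring
  rw [QI_eq_neg_sq_add hl.le hβ (condI_cosh_mul hl β), deriv_cosh_mul]
  simp [h]

/-- On the interval `(-l, l)`, there is a unique `μ > 0` with `μ tanh μ = γ l`,
and the infimum of the Robin Rayleigh quotient equals `-μ²/l²`. -/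
theorem stmt3 (l γ : ℝ) (hl : 0 < l) (hγ : 0 < γ) :
    (∃! μ : ℝ, 0 < μ ∧ μ * Real.tanh μ = γ * l) ∧
    ∀ μ : ℝ, 0 < μ → μ * Real.tanh μ = γ * l →
      IsGLB {r : ℝ | ∃ v, CondI l v ∧ r = QI l γ v} (-μ ^ 2 / l ^ 2) := by
  refine ⟨existsUnique_mul_tanh_eq (mul_pos hγ hl), fun μ _ hμ => ?_⟩
  have hβ : μ / l * tanh (μ / l * l) = γ := by
    rw [div_mul_cancel₀ μ hl.ne', div_mul_eq_mul_div, hμ, mul_div_cancel_right₀ γ hl.ne']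
  rw [neg_div, ← div_pow]
  refine ⟨?_, fun r hr => hr ⟨_, condI_cosh_mul hl _, (QI_cosh_mul hl hβ).symm⟩⟩
  rintro r ⟨v, hv, rfl⟩
  exact neg_sq_le_QI hl.le hβ hv

end
end

section
/- Let 1 < p < 2 and let Υ_p := { (x, y) ∈ ℝ² : x > 0, |y| < x^p } be a planar domain with an outward-pointing cusp at the origin. Then there exist a constant C > 0 and γ₀ > 0 such that for every γ ≥ γ₀ there is a function v admissible for Υ_p with J(v; γ, Υ_p) ≤ −C γ^{2/(2−p)}. In particular, Λ(Υ_p; γ) ≤ −C γ^{2/(2−p)} for all γ ≥ γ₀, so the asymptotics Λ = −C_Ω γ² + o(γ²) fails for domains with outward-pointing cusps. -/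
open MeasureTheory Real Filter Topology

noncomputable section

/-- A function is admissible for the Robin Rayleigh quotient on `Ω ⊆ ℝ^m`:
continuous on the closure, continuously differentiable on `Ω`, with
`0 < ∫_Ω v² < ∞`, `∫_Ω ‖∇v‖² < ∞` and `∫_{∂Ω} v² dH^{m-1} < ∞`. -/
def Admissible {m : ℕ} (Ω : Set (EuclideanSpace ℝ (Fin m)))
    (v : EuclideanSpace ℝ (Fin m) → ℝ) : Prop :=
  ContinuousOn v (closure Ω) ∧
  (∀ x ∈ Ω, DifferentiableAt ℝ v x) ∧
  ContinuousOn (fun x => gradient v x) Ω ∧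
  IntegrableOn (fun x => (v x) ^ 2) Ω volume ∧
  0 < ∫ x in Ω, (v x) ^ 2 ∧
  IntegrableOn (fun x => ‖gradient v x‖ ^ 2) Ω volume ∧
  IntegrableOn (fun x => (v x) ^ 2) (frontier Ω) μH[(m : ℝ) - 1]

/-- The Robin Rayleigh quotient
`J(v; γ, Ω) = (∫_Ω ‖∇v‖² - γ ∫_{∂Ω} v² dH^{m-1}) / ∫_Ω v²`. -/
def RQ {m : ℕ} (Ω : Set (EuclideanSpace ℝ (Fin m))) (γ : ℝ)
    (v : EuclideanSpace ℝ (Fin m) → ℝ) : ℝ :=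
  ((∫ x in Ω, ‖gradient v x‖ ^ 2) - γ * ∫ x in frontier Ω, (v x) ^ 2 ∂μH[(m : ℝ) - 1]) /
    ∫ x in Ω, (v x) ^ 2

/-- The principal Robin eigenvalue `Λ(Ω; γ)`, as an extended real:
the infimum of the Rayleigh quotient over admissible functions. -/
def principalEV {m : ℕ} (Ω : Set (EuclideanSpace ℝ (Fin m))) (γ : ℝ) : EReal :=
  sInf {x : EReal | ∃ v, Admissible Ω v ∧ x = (RQ Ω γ v : EReal)}

/-- The planar cusp domain `Υ_p = {(x, y) : x > 0, |y| < x^p}`. -/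
def cuspDomain (p : ℝ) : Set (EuclideanSpace ℝ (Fin 2)) :=
  {x | 0 < x 0 ∧ |x 1| < (x 0) ^ p}

/-! Test functions concentrated at the tip of the cusp. Let `v = φ(x₀/ε)` with a smooth cutoff `φ`
equal to `1` on `(-∞, 1]` and to `0` on `[2, ∞)`. The part `{x₀ ≤ 2ε}` of `Υ_p` has area
`O(ε^{p+1})`, so `∫|∇v|² = O(ε^{p-1})` and `∫v² = O(ε^{p+1})`, while the boundary arc over
`[0, ε]`, where `v = 1`, has length at least `ε`. Once `γ ε^{2-p}` exceeds a fixed constant the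
boundary term dominates and `J(v; γ) ≲ -ε⁻²`; the choice `ε ≍ γ^{-1/(2-p)}` gives the bound
`-C γ^{2/(2-p)}`. -/

open Set
open scoped ENNReal NNReal

local notation "ℝ²" => EuclideanSpace ℝ (Fin 2)

section VanishingOutside

variable {α : Type*} [MeasurableSpace α] {μ : Measure α} {s U : Set α} {f : α → ℝ} {M : ℝ}

lemma integrableOn_of_bounded_of_eq_zero_off (hs : MeasurableSet s) (hU : MeasurableSet U)
    (hμ : μ (s ∩ U) < ∞) (hf : AEStronglyMeasurable f μ) (hM : ∀ x ∈ s ∩ U, ‖f x‖ ≤ M)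
    (h0 : ∀ x ∈ s, x ∉ U → f x = 0) : IntegrableOn f s μ :=
  (Measure.integrableOn_of_bounded hμ.ne hf ((ae_restrict_iff' (hs.inter hU)).2
    (.of_forall hM))).of_forall_sdiff_eq_zero hs fun x hx => h0 x hx.1 fun h => hx.2 ⟨hx.1, h⟩

lemma setIntegral_le_of_bounded_of_eq_zero_off (hs : MeasurableSet s) (hμ : μ (s ∩ U) < ∞)
    (hM : ∀ x ∈ s ∩ U, ‖f x‖ ≤ M) (h0 : ∀ x ∈ s, x ∉ U → f x = 0) :
    ∫ x in s, f x ∂μ ≤ M * μ.real (s ∩ U) := by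
  rw [setIntegral_eq_of_subset_of_forall_sdiff_eq_zero hs inter_subset_left
    fun x hx => h0 x hx.1 fun h => hx.2 ⟨hx.1, h⟩]
  exact (le_abs_self _).trans (norm_setIntegral_le_of_norm_le_const hμ hM)

end VanishingOutside

section CuspGeometry

variable {p b : ℝ}

lemma measurableSet_setOf_apply_le (i : Fin 2) (b : ℝ) : MeasurableSet {x : ℝ² | x i ≤ b} :=
  (isClosed_le (by fun_prop) continuous_const).measurableSet

lemma isOpen_cuspDomain (hp : 0 < p) : IsOpen (cuspDomain p) := by
  have h0 : Continuous fun x : ℝ² => x 0 := by fun_prop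
  have h1 : Continuous fun x : ℝ² => |x 1| := by fun_prop
  have hpow : Continuous fun x : ℝ² => x 0 ^ p := by fun_prop (disch := exact hp.le)
  exact (isOpen_lt continuous_const h0).inter (isOpen_lt h1 hpow)

lemma frontier_cuspDomain (hp : 0 < p) :
    frontier (cuspDomain p) = {x | 0 ≤ x 0 ∧ |x 1| = x 0 ^ p} := by
  have h0 : Continuous fun x : ℝ² => x 0 := by fun_prop
  have h1 : Continuous fun x : ℝ² => |x 1| := by fun_prop
  have hpow : Continuous fun x : ℝ² => x 0 ^ p := by fun_prop (disch := exact hp.le)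
  rw [(isOpen_cuspDomain hp).frontier_eq]
  ext x
  constructor
  · rintro ⟨hcl, hx⟩
    have hcl : 0 ≤ x 0 ∧ |x 1| ≤ x 0 ^ p :=
      closure_minimal (t := {y : ℝ² | 0 ≤ y 0 ∧ |y 1| ≤ y 0 ^ p})
        (fun y hy => ⟨hy.1.le, hy.2.le⟩)
        ((isClosed_le continuous_const h0).inter (isClosed_le h1 hpow)) hcl
    refine ⟨hcl.1, hcl.2.eq_of_not_lt fun h => ?_⟩
    rcases hcl.1.eq_or_lt with hx0 | hx0
    · rw [← hx0, zero_rpow hp.ne'] at h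
      exact (abs_nonneg (x 1)).not_gt h
    · exact hx ⟨hx0, h⟩
  · rintro ⟨hx0, hx1⟩
    refine ⟨mem_closure_of_tendsto (b := 𝓝[>] (0 : ℝ))
      (f := fun δ : ℝ => x + δ • EuclideanSpace.single 0 1) ?_ ?_, fun h => h.2.ne hx1⟩
    · exact ((Continuous.tendsto (by fun_prop) 0).mono_left nhdsWithin_le_nhds).trans_eq
        (by simp)
    · filter_upwards [self_mem_nhdsWithin] with δ (hδ : 0 < δ)
      have hy0 : (x + δ • EuclideanSpace.single 0 1 : ℝ²) 0 = x 0 + δ := by simp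
      have hy1 : (x + δ • EuclideanSpace.single 0 1 : ℝ²) 1 = x 1 := by simp
      refine ⟨by rw [hy0]; linarith, ?_⟩
      rw [hy0, hy1, hx1]
      exact rpow_lt_rpow hx0 (by linarith) hp

def graphMap (f : ℝ → ℝ) (t : ℝ) : ℝ² := !₂[t, f t]

@[simp] lemma graphMap_zero (f : ℝ → ℝ) (t : ℝ) : graphMap f t 0 = t := rfl

@[simp] lemma graphMap_one (f : ℝ → ℝ) (t : ℝ) : graphMap f t 1 = f t := rfl

lemma LipschitzOnWith.graphMap {f : ℝ → ℝ} {K : ℝ≥0} {s : Set ℝ}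
    (hf : LipschitzOnWith K f s) : LipschitzOnWith (1 + K) (graphMap f) s := by
  refine LipschitzOnWith.of_dist_le_mul fun t ht u hu => ?_
  have hfd := hf.dist_le_mul t ht u hu
  rw [EuclideanSpace.dist_eq, Fin.sum_univ_two, graphMap_zero, graphMap_zero, graphMap_one,
    graphMap_one, NNReal.coe_add, NNReal.coe_one]
  exact sqrt_le_iff.2 ⟨by positivity,
    by nlinarith [dist_nonneg (x := t) (y := u), dist_nonneg (x := f t) (y := f u)]⟩

lemma graphMap_rpow_mem_frontier (hp : 0 < p) {t : ℝ} (ht : 0 ≤ t) :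
    graphMap (· ^ p) t ∈ frontier (cuspDomain p) := by
  rw [frontier_cuspDomain hp]
  exact ⟨ht, abs_of_nonneg (rpow_nonneg ht p)⟩

lemma frontier_cuspDomain_inter_subset (hp : 0 < p) :
    frontier (cuspDomain p) ∩ {x | x 0 ≤ b} ⊆
      graphMap (· ^ p) '' Icc 0 b ∪ graphMap (fun t => -t ^ p) '' Icc 0 b := by
  rw [frontier_cuspDomain hp]
  rintro x ⟨⟨hx0, hx1⟩, hxb⟩
  rcases abs_eq (rpow_nonneg hx0 p) |>.1 hx1 with h | h
  · exact .inl ⟨x 0, ⟨hx0, hxb⟩, by ext i; fin_cases i <;> simp [h]⟩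
  · exact .inr ⟨x 0, ⟨hx0, hxb⟩, by ext i; fin_cases i <;> simp [h]⟩

lemma lipschitzWith_apply_zero : LipschitzWith 1 fun x : ℝ² => x 0 :=
  LipschitzWith.of_dist_le_mul fun x y => by simpa using PiLp.dist_apply_le x y 0

lemma ofReal_le_hausdorffMeasure_frontier_cuspDomain_inter (hp : 0 < p) :
    ENNReal.ofReal b ≤ μH[1] (frontier (cuspDomain p) ∩ {x | x 0 ≤ b}) := by
  set S := frontier (cuspDomain p) ∩ {x | x 0 ≤ b}
  have himg : Icc 0 b ⊆ (fun x : ℝ² => x 0) '' S :=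
    fun t ht => ⟨graphMap (· ^ p) t, ⟨graphMap_rpow_mem_frontier hp ht.1, ht.2⟩, rfl⟩
  calc ENNReal.ofReal b = μH[1] (Icc 0 b) := by rw [hausdorffMeasure_real, volume_Icc, sub_zero]
    _ ≤ μH[1] ((fun x : ℝ² => x 0) '' S) := measure_mono himg
    _ ≤ μH[1] S := by simpa using lipschitzWith_apply_zero.hausdorffMeasure_image_le zero_le_one S

lemma hausdorffMeasure_graphMap_Icc_lt_top {f : ℝ → ℝ} {K : ℝ≥0}
    (hf : LipschitzOnWith K f (Icc 0 b)) : μH[1] (graphMap f '' Icc 0 b) < ∞ := by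
  refine (hf.graphMap.hausdorffMeasure_image_le zero_le_one).trans_lt (ENNReal.mul_lt_top ?_ ?_)
  · simp
  · simp [hausdorffMeasure_real]

lemma hausdorffMeasure_frontier_cuspDomain_inter_lt_top (hp : 1 ≤ p) :
    μH[1] (frontier (cuspDomain p) ∩ {x | x 0 ≤ b}) < ∞ := by
  obtain ⟨K, hK⟩ := (contDiff_rpow_const_of_le (n := 1) (by simpa using hp)).contDiffOn
    |>.exists_lipschitzOnWith one_ne_zero (convex_Icc 0 b) isCompact_Icc
  refine (measure_mono (frontier_cuspDomain_inter_subset (by linarith))).trans_lt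
    ((measure_union_le _ _).trans_lt (ENNReal.add_lt_top.2 ⟨?_, ?_⟩))
  · exact hausdorffMeasure_graphMap_Icc_lt_top hK
  · exact hausdorffMeasure_graphMap_Icc_lt_top (LipschitzWith.id.neg.comp_lipschitzOnWith hK)

lemma volume_cuspDomain_inter_le (hp : 0 < p) (hb : 0 ≤ b) :
    volume (cuspDomain p ∩ {x | x 0 ≤ b}) ≤ ENNReal.ofReal (2 * b * b ^ p) := by
  have hsub : cuspDomain p ∩ {x | x 0 ≤ b} ⊆ (MeasurableEquiv.toLp 2 (Fin 2 → ℝ)).symm ⁻¹'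
      univ.pi ![Icc 0 b, Icc (-b ^ p) (b ^ p)] := by
    rintro x ⟨⟨hx0, hx1⟩, hxb⟩
    have hx1 := abs_le.1 (hx1.le.trans (rpow_le_rpow hx0.le hxb hp.le))
    simpa [Fin.forall_fin_two] using ⟨⟨hx0.le, hxb⟩, hx1⟩
  refine (measure_mono hsub).trans_eq ?_
  rw [(EuclideanSpace.volume_preserving_symm_measurableEquiv_toLp (Fin 2)).measure_preimage
    (MeasurableSet.univ_pi fun i => by fin_cases i <;> exact measurableSet_Icc).nullMeasurableSet,
    volume_pi_pi, Fin.prod_univ_two]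
  simp only [Matrix.cons_val_zero, Matrix.cons_val_one, volume_Icc, sub_zero]
  rw [← ENNReal.ofReal_mul hb]
  ring_nf

lemma volume_cuspDomain_inter_lt_top (hp : 0 < p) (hb : 0 ≤ b) :
    volume (cuspDomain p ∩ {x | x 0 ≤ b}) < ∞ :=
  (volume_cuspDomain_inter_le hp hb).trans_lt ENNReal.ofReal_lt_top

lemma measureReal_cuspDomain_inter_le (hp : 0 < p) (hp2 : p ≤ 2) {ε : ℝ} (hε : 0 < ε) :
    volume.real (cuspDomain p ∩ {x | x 0 ≤ 2 * ε}) ≤ 16 * ε * ε ^ p := by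
  refine ENNReal.toReal_le_of_le_ofReal (by positivity)
    ((volume_cuspDomain_inter_le hp (by positivity)).trans (ENNReal.ofReal_le_ofReal ?_))
  have h2p : (2 : ℝ) ^ p ≤ 4 :=
    (rpow_le_rpow_of_exponent_le one_le_two hp2).trans_eq (by norm_num [rpow_two])
  rw [mul_rpow zero_le_two hε.le]
  nlinarith [mul_le_mul_of_nonneg_right h2p (mul_pos hε (rpow_pos_of_pos hε p)).le]

end CuspGeometry

section TestFunction

lemma exists_lipschitzWith_smoothTransition :
    ∃ K : ℝ≥0, 0 < K ∧ LipschitzWith K smoothTransition := by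
  obtain ⟨K, hK⟩ := (smoothTransition.contDiff (n := 1)).contDiffOn.exists_lipschitzOnWith
    one_ne_zero (convex_Icc (0 : ℝ) 1) isCompact_Icc
  refine ⟨K + 1, by positivity, LipschitzWith.of_dist_le_mul fun x y => ?_⟩
  rw [← smoothTransition.projIcc (x := x), ← smoothTransition.projIcc (x := y)]
  calc _ ≤ K * dist (projIcc (0 : ℝ) 1 zero_le_one x : ℝ) (projIcc 0 1 zero_le_one y) :=
        hK.dist_le_mul _ (projIcc 0 1 _ x).2 _ (projIcc 0 1 _ y).2
    _ ≤ K * dist x y := by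
        gcongr
        have := (LipschitzWith.projIcc (zero_le_one' ℝ)).dist_le_mul x y
        rwa [Subtype.dist_eq, NNReal.coe_one, one_mul] at this
    _ ≤ ↑(K + 1) * dist x y := by gcongr; simp

def cuspTestFn (ε : ℝ) (x : ℝ²) : ℝ := smoothTransition (2 - x 0 / ε)

variable {ε : ℝ} {x : ℝ²}

lemma cuspTestFn_eq_one (hε : 0 < ε) (hx : x 0 ≤ ε) : cuspTestFn ε x = 1 :=
  smoothTransition.one_of_one_le <| by
    have : x 0 / ε ≤ 1 := (div_le_one hε).2 hx
    linarith

lemma cuspTestFn_eq_zero (hε : 0 < ε) (hx : 2 * ε ≤ x 0) : cuspTestFn ε x = 0 :=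
  smoothTransition.zero_of_nonpos <| by
    have : 2 ≤ x 0 / ε := (le_div_iff₀ hε).2 hx
    linarith

lemma norm_cuspTestFn_sq_le (ε : ℝ) (x : ℝ²) : ‖cuspTestFn ε x ^ 2‖ ≤ 1 := by
  have h0 : 0 ≤ cuspTestFn ε x := smoothTransition.nonneg _
  rw [norm_pow, norm_of_nonneg h0]
  exact pow_le_one₀ h0 (smoothTransition.le_one _)

lemma contDiff_cuspTestFn : ContDiff ℝ 1 (cuspTestFn ε) :=
  smoothTransition.contDiff.comp (by fun_prop)

lemma continuous_gradient_cuspTestFn : Continuous (gradient (cuspTestFn ε)) :=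
  (InnerProductSpace.toDual ℝ ℝ²).symm.continuous.comp
    (contDiff_cuspTestFn.continuous_fderiv one_ne_zero)

lemma norm_gradient_cuspTestFn_le {K : ℝ≥0} (hK : LipschitzWith K smoothTransition)
    (hε : 0 < ε) (x : ℝ²) : ‖gradient (cuspTestFn ε) x‖ ≤ K / ε := by
  have hlip : LipschitzWith (K / ε).toNNReal (cuspTestFn ε) := .of_dist_le' fun x y => by
    calc dist (cuspTestFn ε x) (cuspTestFn ε y) ≤ K * dist (2 - x 0 / ε) (2 - y 0 / ε) :=
          hK.dist_le_mul _ _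
      _ = K / ε * dist (x 0) (y 0) := by
          rw [dist_sub_left, dist_eq, dist_eq, ← sub_div, abs_div, abs_of_pos hε]
          ring
      _ ≤ K / ε * dist x y := by gcongr; exact PiLp.dist_apply_le x y 0
  calc ‖gradient (cuspTestFn ε) x‖ = ‖fderiv ℝ (cuspTestFn ε) x‖ := by simp [gradient]
    _ ≤ (K / ε).toNNReal := norm_fderiv_le_of_lipschitz ℝ hlip
    _ = K / ε := coe_toNNReal _ (by positivity)

lemma norm_gradient_cuspTestFn_sq_le {K : ℝ≥0} (hK : LipschitzWith K smoothTransition)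
    (hε : 0 < ε) (x : ℝ²) : ‖‖gradient (cuspTestFn ε) x‖ ^ 2‖ ≤ (K / ε) ^ 2 := by
  rw [norm_pow, norm_norm]
  exact pow_le_pow_left₀ (norm_nonneg _) (norm_gradient_cuspTestFn_le hK hε x) 2

lemma gradient_cuspTestFn_eq_zero (hε : 0 < ε) (hx : 2 * ε < x 0) :
    gradient (cuspTestFn ε) x = 0 := by
  have hopen : IsOpen {y : ℝ² | 2 * ε < y 0} := isOpen_lt continuous_const (by fun_prop)
  have : cuspTestFn ε =ᶠ[𝓝 x] fun _ => 0 := by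
    filter_upwards [hopen.mem_nhds hx] with y hy using cuspTestFn_eq_zero hε hy.le
  rw [this.gradient_eq]
  simp [gradient]

end TestFunction

section Estimates

variable {p ε : ℝ}

lemma integrableOn_cuspTestFn_sq (hp : 0 < p) (hε : 0 < ε) :
    IntegrableOn (fun x => cuspTestFn ε x ^ 2) (cuspDomain p) :=
  integrableOn_of_bounded_of_eq_zero_off (isOpen_cuspDomain hp).measurableSet
    (measurableSet_setOf_apply_le 0 _)
    (volume_cuspDomain_inter_lt_top (b := 2 * ε) hp (by positivity))
    (contDiff_cuspTestFn.continuous.pow 2).aestronglyMeasurable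
    (fun x _ => norm_cuspTestFn_sq_le ε x)
    (fun x _ hx => by rw [cuspTestFn_eq_zero hε (not_le.1 hx).le]; simp)

lemma setIntegral_cuspTestFn_sq_le (hp : 0 < p) (hp2 : p ≤ 2) (hε : 0 < ε) :
    ∫ x in cuspDomain p, cuspTestFn ε x ^ 2 ≤ 16 * ε * ε ^ p :=
  calc _ ≤ 1 * volume.real (cuspDomain p ∩ {x | x 0 ≤ 2 * ε}) :=
        setIntegral_le_of_bounded_of_eq_zero_off (isOpen_cuspDomain hp).measurableSet
          (volume_cuspDomain_inter_lt_top (b := 2 * ε) hp (by positivity))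
          (fun x _ => norm_cuspTestFn_sq_le ε x)
          (fun x _ hx => by rw [cuspTestFn_eq_zero hε (not_le.1 hx).le]; simp)
    _ ≤ 16 * ε * ε ^ p := by
        rw [one_mul]; exact measureReal_cuspDomain_inter_le hp hp2 hε

lemma setIntegral_cuspTestFn_sq_pos (hp : 0 < p) (hε : 0 < ε) :
    0 < ∫ x in cuspDomain p, cuspTestFn ε x ^ 2 := by
  rw [setIntegral_pos_iff_support_of_nonneg_ae (.of_forall fun _ => sq_nonneg _)
    (integrableOn_cuspTestFn_sq hp hε)]
  have hopen : IsOpen (cuspDomain p ∩ {x | x 0 < ε}) :=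
    (isOpen_cuspDomain hp).inter (isOpen_lt (by fun_prop) continuous_const)
  refine (hopen.measure_pos volume ⟨!₂[ε / 2, 0], ⟨?_, ?_⟩, ?_⟩).trans_le (measure_mono ?_)
  · exact half_pos hε
  · simpa using rpow_pos_of_pos (half_pos hε) p
  · exact half_lt_self hε
  · rintro x ⟨hxΩ, hx⟩
    exact ⟨by simp [cuspTestFn_eq_one hε hx.le], hxΩ⟩

lemma integrableOn_norm_gradient_cuspTestFn_sq (hp : 0 < p) (hε : 0 < ε) :
    IntegrableOn (fun x => ‖gradient (cuspTestFn ε) x‖ ^ 2) (cuspDomain p) := by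
  obtain ⟨K, -, hK⟩ := exists_lipschitzWith_smoothTransition
  exact integrableOn_of_bounded_of_eq_zero_off (isOpen_cuspDomain hp).measurableSet
    (measurableSet_setOf_apply_le 0 _)
    (volume_cuspDomain_inter_lt_top (b := 2 * ε) hp (by positivity))
    (continuous_gradient_cuspTestFn.norm.pow 2).aestronglyMeasurable
    (fun x _ => norm_gradient_cuspTestFn_sq_le hK hε x)
    (fun x _ hx => by rw [gradient_cuspTestFn_eq_zero hε (not_le.1 hx)]; simp)

lemma setIntegral_norm_gradient_cuspTestFn_sq_le {K : ℝ≥0}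
    (hK : LipschitzWith K smoothTransition) (hp : 0 < p) (hp2 : p ≤ 2) (hε : 0 < ε) :
    ∫ x in cuspDomain p, ‖gradient (cuspTestFn ε) x‖ ^ 2 ≤ 16 * K ^ 2 * ε ^ p / ε :=
  calc _ ≤ (K / ε) ^ 2 * volume.real (cuspDomain p ∩ {x | x 0 ≤ 2 * ε}) :=
        setIntegral_le_of_bounded_of_eq_zero_off (isOpen_cuspDomain hp).measurableSet
          (volume_cuspDomain_inter_lt_top (b := 2 * ε) hp (by positivity))
          (fun x _ => norm_gradient_cuspTestFn_sq_le hK hε x)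
          (fun x _ hx => by rw [gradient_cuspTestFn_eq_zero hε (not_le.1 hx)]; simp)
    _ ≤ (K / ε) ^ 2 * (16 * ε * ε ^ p) := by
        gcongr; exact measureReal_cuspDomain_inter_le hp hp2 hε
    _ = 16 * K ^ 2 * ε ^ p / ε := by field_simp

lemma integrableOn_frontier_cuspTestFn_sq (hp : 1 ≤ p) (hε : 0 < ε) :
    IntegrableOn (fun x => cuspTestFn ε x ^ 2) (frontier (cuspDomain p)) μH[1] :=
  integrableOn_of_bounded_of_eq_zero_off isClosed_frontier.measurableSet
    (measurableSet_setOf_apply_le 0 _) (hausdorffMeasure_frontier_cuspDomain_inter_lt_top hp)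
    (contDiff_cuspTestFn.continuous.pow 2).aestronglyMeasurable
    (fun x _ => norm_cuspTestFn_sq_le ε x)
    (fun x _ hx => by rw [cuspTestFn_eq_zero hε (not_le.1 hx).le]; simp)

lemma le_setIntegral_frontier_cuspTestFn_sq (hp : 1 ≤ p) (hε : 0 < ε) :
    ε ≤ ∫ x in frontier (cuspDomain p), cuspTestFn ε x ^ 2 ∂μH[1] := by
  set S := frontier (cuspDomain p) ∩ {x | x 0 ≤ ε}
  have hS : MeasurableSet S :=
    isClosed_frontier.measurableSet.inter (measurableSet_setOf_apply_le 0 _)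
  calc ε ≤ μH[1].real S := (ENNReal.ofReal_le_iff_le_toReal
        (hausdorffMeasure_frontier_cuspDomain_inter_lt_top hp).ne).1
        (ofReal_le_hausdorffMeasure_frontier_cuspDomain_inter (by linarith))
    _ = ∫ x in S, cuspTestFn ε x ^ 2 ∂μH[1] := by
        rw [setIntegral_congr_fun (g := fun _ => 1) hS
          fun x hx => by simp [cuspTestFn_eq_one hε hx.2]]
        simp
    _ ≤ _ := setIntegral_mono_set (integrableOn_frontier_cuspTestFn_sq hp hε)
        (.of_forall fun _ => sq_nonneg _) inter_subset_left.eventuallyLE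

lemma hausdorffMeasure_two_sub_one :
    (μH[((2 : ℕ) : ℝ) - 1] : Measure ℝ²) = μH[1] := by
  norm_num

lemma admissible_cuspTestFn (hp : 1 ≤ p) (hε : 0 < ε) :
    Admissible (cuspDomain p) (cuspTestFn ε) := by
  have hp0 : 0 < p := by linarith
  refine ⟨contDiff_cuspTestFn.continuous.continuousOn,
    fun x _ => contDiff_cuspTestFn.differentiable one_ne_zero x,
    continuous_gradient_cuspTestFn.continuousOn, integrableOn_cuspTestFn_sq hp0 hε,
    setIntegral_cuspTestFn_sq_pos hp0 hε, integrableOn_norm_gradient_cuspTestFn_sq hp0 hε, ?_⟩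
  rw [hausdorffMeasure_two_sub_one]
  exact integrableOn_frontier_cuspTestFn_sq hp hε

lemma RQ_cuspTestFn_le {K : ℝ≥0} (hK : LipschitzWith K smoothTransition) (hp : 1 ≤ p)
    (hp2 : p ≤ 2) (hε : 0 < ε) {γ : ℝ} (hγ : 32 * K ^ 2 * ε ^ p ≤ γ * ε ^ 2) :
    RQ (cuspDomain p) γ (cuspTestFn ε) ≤ -K ^ 2 / ε ^ 2 := by
  have hp0 : 0 < p := by linarith
  have hεp : 0 < ε ^ p := rpow_pos_of_pos hε p
  have hγ0 : 0 ≤ γ := nonneg_of_mul_nonneg_left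
    ((by positivity : (0 : ℝ) ≤ 32 * K ^ 2 * ε ^ p).trans hγ) (by positivity)
  have hA := setIntegral_norm_gradient_cuspTestFn_sq_le hK hp0 hp2 hε
  have hB := mul_le_mul_of_nonneg_left (le_setIntegral_frontier_cuspTestFn_sq hp hε) hγ0
  have hD := setIntegral_cuspTestFn_sq_le hp0 hp2 hε
  have hD0 := setIntegral_cuspTestFn_sq_pos hp0 hε
  rw [RQ, hausdorffMeasure_two_sub_one]
  set A := ∫ x in cuspDomain p, ‖gradient (cuspTestFn ε) x‖ ^ 2
  set B := ∫ x in frontier (cuspDomain p), cuspTestFn ε x ^ 2 ∂μH[1]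
  set D := ∫ x in cuspDomain p, cuspTestFn ε x ^ 2
  set t := 16 * K ^ 2 * ε ^ p / ε
  have hγε : 2 * t ≤ γ * ε := by
    rw [← mul_div_assoc, div_le_iff₀ hε]
    nlinarith
  have hnum : A - γ * B ≤ -t := by linarith
  calc (A - γ * B) / D ≤ -t / D := div_le_div_of_nonneg_right hnum hD0.le
    _ = -(t / D) := neg_div _ _
    _ ≤ -(t / (16 * ε * ε ^ p)) := neg_le_neg (div_le_div_of_nonneg_left (by positivity) hD0 hD)
    _ = -K ^ 2 / ε ^ 2 := by simp only [t]; field_simp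

end Estimates

lemma principalEV_le_RQ {m : ℕ} {Ω : Set (EuclideanSpace ℝ (Fin m))}
    {v : EuclideanSpace ℝ (Fin m) → ℝ} (hv : Admissible Ω v) (γ : ℝ) :
    principalEV Ω γ ≤ (RQ Ω γ v : EReal) :=
  sInf_le ⟨v, hv, rfl⟩

/-- For the cusp domain `Υ_p` with `1 < p < 2`, there are `C > 0` and `γ₀ > 0` such
that for `γ ≥ γ₀` some admissible test function has Rayleigh quotient
`≤ -C γ^{2/(2-p)}`; in particular `Λ(Υ_p;γ) ≤ -C γ^{2/(2-p)}`. -/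
theorem stmt16 (p : ℝ) (hp1 : 1 < p) (hp2 : p < 2) :
    ∃ C : ℝ, 0 < C ∧ ∃ γ₀ : ℝ, 0 < γ₀ ∧ ∀ γ : ℝ, γ₀ ≤ γ →
      (∃ v, Admissible (cuspDomain p) v ∧
        RQ (cuspDomain p) γ v ≤ -C * γ ^ (2 / (2 - p))) ∧
      principalEV (cuspDomain p) γ ≤ ((-C * γ ^ (2 / (2 - p)) : ℝ) : EReal) := by
  obtain ⟨K, hK0, hK⟩ := exists_lipschitzWith_smoothTransition
  have h2p : 0 < 2 - p := by linarith
  set κ : ℝ := 32 * K ^ 2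
  have hκ : 0 < κ := by positivity
  refine ⟨K ^ 2 / κ ^ (2 / (2 - p)), by positivity, 1, one_pos, fun γ hγ => ?_⟩
  have hγ0 : 0 < γ := one_pos.trans_le hγ
  set ε := (κ / γ) ^ (1 / (2 - p))
  have hε : 0 < ε := by positivity
  have hεp : ε ^ (2 - p) = κ / γ := by
    rw [← rpow_mul (by positivity), one_div_mul_cancel h2p.ne', rpow_one]
  have hε2 : ε ^ 2 = ε ^ p * (κ / γ) := by
    rw [← hεp, ← rpow_add hε, ← rpow_natCast]
    norm_num
  have hε2' : ε ^ 2 = κ ^ (2 / (2 - p)) / γ ^ (2 / (2 - p)) := by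
    rw [← div_rpow hκ.le hγ0.le, ← hεp, ← rpow_mul hε.le, mul_div_cancel₀ _ h2p.ne', rpow_two]
  have hRQ : RQ (cuspDomain p) γ (cuspTestFn ε) ≤
      -(K ^ 2 / κ ^ (2 / (2 - p))) * γ ^ (2 / (2 - p)) := by
    refine (RQ_cuspTestFn_le hK hp1.le hp2.le hε ?_).trans_eq ?_
    · rw [hε2]; field_simp; rfl
    · rw [hε2']; field_simp
  have hv := admissible_cuspTestFn hp1.le hε
  exact ⟨⟨_, hv, hRQ⟩, (principalEV_le_RQ hv γ).trans (EReal.coe_le_coe_iff.2 hRQ)⟩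

end
end
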